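/- For n ≥ 2, the submonoid of doubly stochastic n×n matrices generated by Robin Hood matrices is a proper submonoid: it does not contain any permutation matrix other than the identity, while the monoid of doubly stochastic matrices contains all permutation matrices. -/

import Mathlib

/-- A matrix is doubly stochastic if it has nonnegative entries and all row and column
sums equal `1`. -/
def DoublyStochastic {n : ℕ} (D : Matrix (Fin n) (Fin n) ℝ) : Prop :=
  (∀ i j, 0 ≤ D i j) ∧ (∀ i, ∑ j, D i j = 1) ∧ (∀ j, ∑ i, D i j = 1)

/-- The Robin Hood matrix `R_{ij}(t)`: the identity except that entries `(i,i)` and `(j,j)`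
are `t` and entries `(i,j)` and `(j,i)` are `1 - t`. -/
noncomputable def rhMatrix (n : ℕ) (i j : Fin n) (t : ℝ) : Matrix (Fin n) (Fin n) ℝ :=
  Matrix.of fun a b =>
    if a = i ∧ b = i then t else if a = j ∧ b = j then t
    else if a = i ∧ b = j then 1 - t else if a = j ∧ b = i then 1 - t
    else if a = b then 1 else 0

/-- A Robin Hood matrix: some `R_{ij}(t)` with `i ≠ j` and `t ∈ [1/2, 1]`. -/
def IsRobinHood {n : ℕ} (R : Matrix (Fin n) (Fin n) ℝ) : Prop :=
  ∃ (i j : Fin n) (t : ℝ), i ≠ j ∧ t ∈ Set.Icc (1 / 2 : ℝ) 1 ∧ R = rhMatrix n i j t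

/-- A permutation matrix. -/
def IsPermMatrix {n : ℕ} (P : Matrix (Fin n) (Fin n) ℝ) : Prop :=
  ∃ σ : Equiv.Perm (Fin n), P = Matrix.of fun a b => if σ a = b then 1 else 0

/-!
A Robin Hood matrix `R_{ij}(t)` is the convex combination `t • 1 + (1 - t) • P_{(i j)}`, so it
is doubly stochastic with every diagonal entry at least `t ≥ 1/2`. Entrywise nonnegative
matrices with positive diagonal are closed under multiplication, so every product of Robin
Hood matrices has positive diagonal. A permutation matrix has a zero on the diagonal unless it
is the identity; hence the transposition matrix `P_{(0 1)}`, doubly stochastic for `n ≥ 2`,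
is not such a product.
-/

open Matrix

namespace Matrix

variable (ι R : Type*) [Fintype ι] [DecidableEq ι] [Semiring R] [PartialOrder R]
  [IsStrictOrderedRing R]

def nonnegPosDiag : Submonoid (Matrix ι ι R) where
  carrier := {M | (∀ i j, 0 ≤ M i j) ∧ ∀ i, 0 < M i i}
  one_mem' := ⟨fun i j => by by_cases h : i = j <;> simp [one_apply, h], fun i => by simp⟩
  mul_mem' := by
    rintro M N ⟨hM, hMd⟩ ⟨hN, hNd⟩
    refine ⟨fun i j => Finset.sum_nonneg fun k _ => mul_nonneg (hM i k) (hN k j), fun i => ?_⟩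
    calc 0 < M i i * N i i := mul_pos (hMd i) (hNd i)
      _ ≤ (M * N) i i :=
        Finset.single_le_sum (f := fun k => M i k * N k i)
          (fun k _ => mul_nonneg (hM i k) (hN k i)) (Finset.mem_univ i)

end Matrix

lemma ofPerm_eq_permMatrix {ι R : Type*} [DecidableEq ι] [Zero R] [One R] (σ : Equiv.Perm ι) :
    (of fun a b => if σ a = b then (1 : R) else 0) = σ.permMatrix R := by
  ext a b
  simp [PEquiv.toMatrix_apply, eq_comm]

lemma isPermMatrix_permMatrix {n : ℕ} (σ : Equiv.Perm (Fin n)) : IsPermMatrix (σ.permMatrix ℝ) :=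
  ⟨σ, (ofPerm_eq_permMatrix σ).symm⟩

lemma doublyStochastic_iff_mem {n : ℕ} {D : Matrix (Fin n) (Fin n) ℝ} :
    DoublyStochastic D ↔ D ∈ doublyStochastic ℝ (Fin n) := by
  rw [mem_doublyStochastic_iff_sum]
  rfl

lemma IsPermMatrix.doublyStochastic {n : ℕ} {P : Matrix (Fin n) (Fin n) ℝ} (hP : IsPermMatrix P) :
    DoublyStochastic P := by
  obtain ⟨σ, rfl⟩ := hP
  rw [doublyStochastic_iff_mem, ofPerm_eq_permMatrix]
  exact permMatrix_mem_doublyStochastic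

lemma rhMatrix_eq_smul_one_add_smul_permMatrix {n : ℕ} {i j : Fin n} (hij : i ≠ j) (t : ℝ) :
    rhMatrix n i j t = t • 1 + (1 - t) • (Equiv.swap i j).permMatrix ℝ := by
  rw [← ofPerm_eq_permMatrix]
  ext a b
  simp only [rhMatrix, of_apply, Matrix.add_apply, Matrix.smul_apply, Matrix.one_apply,
    smul_eq_mul, Equiv.swap_apply_def]
  split_ifs <;> grind

namespace IsRobinHood

variable {n : ℕ} {R : Matrix (Fin n) (Fin n) ℝ}

lemma mem_doublyStochastic (hR : IsRobinHood R) : R ∈ doublyStochastic ℝ (Fin n) := by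
  obtain ⟨i, j, t, hij, ⟨ht₀, ht₁⟩, rfl⟩ := hR
  rw [rhMatrix_eq_smul_one_add_smul_permMatrix hij]
  exact convex_doublyStochastic (one_mem _) permMatrix_mem_doublyStochastic
    (by linarith) (by linarith) (by ring)

lemma diag_pos (hR : IsRobinHood R) (a : Fin n) : 0 < R a a := by
  obtain ⟨i, j, t, hij, ⟨ht₀, ht₁⟩, rfl⟩ := hR
  have hswap : 0 ≤ (Equiv.swap i j).permMatrix ℝ a a :=
    nonneg_of_mem_doublyStochastic permMatrix_mem_doublyStochastic
  rw [rhMatrix_eq_smul_one_add_smul_permMatrix hij]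
  simp only [Matrix.add_apply, Matrix.smul_apply, one_apply_eq, smul_eq_mul, mul_one]
  have := mul_nonneg (sub_nonneg.2 ht₁) hswap
  linarith

lemma mem_nonnegPosDiag (hR : IsRobinHood R) : R ∈ nonnegPosDiag (Fin n) ℝ :=
  ⟨fun _ _ => nonneg_of_mem_doublyStochastic hR.mem_doublyStochastic, hR.diag_pos⟩

end IsRobinHood

lemma perm_eq_one_of_list_prod_robinHood_eq_permMatrix {n : ℕ}
    {L : List (Matrix (Fin n) (Fin n) ℝ)} (hL : ∀ R ∈ L, IsRobinHood R)
    {σ : Equiv.Perm (Fin n)} (hσ : L.prod = σ.permMatrix ℝ) : σ = 1 := by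
  have hpos : L.prod ∈ nonnegPosDiag (Fin n) ℝ :=
    Submonoid.list_prod_mem _ fun R hR => (hL R hR).mem_nonnegPosDiag
  refine Equiv.ext fun a => ?_
  have ha := hpos.2 a
  rw [hσ, ← ofPerm_eq_permMatrix, of_apply] at ha
  simpa using ha.ne'

/-- For `n ≥ 2`, the monoid generated by Robin Hood matrices is a proper submonoid of the
doubly stochastic matrices: all permutation matrices are doubly stochastic, products of Robin
Hood matrices are doubly stochastic, but some doubly stochastic (in fact permutation) matrix is
not a product of Robin Hood matrices. -/
theorem robinHood_proper_submonoid (n : ℕ) (hn : 2 ≤ n) :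
    (∀ P : Matrix (Fin n) (Fin n) ℝ, IsPermMatrix P → DoublyStochastic P) ∧
    (∀ L : List (Matrix (Fin n) (Fin n) ℝ), (∀ R ∈ L, IsRobinHood R) →
      DoublyStochastic L.prod) ∧
    (∃ D : Matrix (Fin n) (Fin n) ℝ, IsPermMatrix D ∧ DoublyStochastic D ∧
      ∀ L : List (Matrix (Fin n) (Fin n) ℝ), (∀ R ∈ L, IsRobinHood R) → L.prod ≠ D) := by
  refine ⟨fun P hP => hP.doublyStochastic, fun L hL => ?_, ?_⟩
  · rw [doublyStochastic_iff_mem]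
    exact Submonoid.list_prod_mem _ fun R hR => (hL R hR).mem_doublyStochastic
  · let i₀ : Fin n := ⟨0, by omega⟩
    let i₁ : Fin n := ⟨1, by omega⟩
    have h01 : i₀ ≠ i₁ := by simp [i₀, i₁]
    have hP := isPermMatrix_permMatrix (Equiv.swap i₀ i₁)
    exact ⟨_, hP, hP.doublyStochastic, fun L hL hprod => h01 (Equiv.swap_eq_one_iff.mp
      (perm_eq_one_of_list_prod_robinHood_eq_permMatrix hL hprod))⟩
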